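/- arXiv:1712.01980 — 2 statements merged into one kernel-verified Lean document; each statement's English description precedes it below -/
import Mathlib

section
/- (Universality of dual-indeterminate polynomials) For any commutative semiring K and any function f : X ∪ X̄ → K such that f(p)·f(p̄) = 0 for all p ∈ X, there exists a unique semiring homomorphism h : ℕ[X,X̄] → K such that h(x) = f(x) for all x ∈ X ∪ X̄ (where elements of X ∪ X̄ are identified with their images in ℕ[X,X̄]). -/
open MvPolynomial

/-- Generating relation for the dual-indeterminate congruence: `p · p̄ = 0` for `p ∈ X`
(we realize the set of tokens `X ∪ X̄` as the sum type `X ⊕ X`, with `Sum.inl p = p`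
and `Sum.inr p = p̄`). -/
def pairRel (X : Type) : MvPolynomial (X ⊕ X) ℕ → MvPolynomial (X ⊕ X) ℕ → Prop :=
  fun a b => b = 0 ∧ ∃ p : X, a = MvPolynomial.X (Sum.inl p) * MvPolynomial.X (Sum.inr p)

/-- The semiring congruence on `ℕ[X ∪ X̄]` generated by `p · p̄ = 0` for all `p ∈ X`. -/
noncomputable def dualCon (X : Type) : RingCon (MvPolynomial (X ⊕ X) ℕ) := ringConGen (pairRel X)

/-- `ℕ[X,X̄]`: the commutative semiring of dual-indeterminate polynomials, i.e. the
quotient of the polynomial semiring `ℕ[X ∪ X̄]` by the congruence `p · p̄ = 0`. -/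
abbrev DualPoly (X : Type) := (dualCon X).Quotient

/-- The image in `ℕ[X,X̄]` of a provenance token `x ∈ X ∪ X̄`. -/
noncomputable def tok {X : Type} (x : X ⊕ X) : DualPoly X :=
  ((MvPolynomial.X x : MvPolynomial (X ⊕ X) ℕ) : DualPoly X)

open Classical in
/-- Deleting from a polynomial all monomials that contain a pair of complementary tokens. -/
noncomputable def clean {X : Type} (q : MvPolynomial (X ⊕ X) ℕ) : MvPolynomial (X ⊕ X) ℕ :=
  ∑ m ∈ q.support.filter
      (fun m => ¬ ∃ p : X, m (Sum.inl p) ≠ 0 ∧ m (Sum.inr p) ≠ 0),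
    MvPolynomial.monomial m (q.coeff m)

/-- A representative polynomial of an element of `ℕ[X,X̄]`. -/
noncomputable def qrep {X : Type} (q : DualPoly X) : MvPolynomial (X ⊕ X) ℕ :=
  (Quot.exists_rep q).choose

/-- The coefficient of the monomial `m` in a dual-indeterminate polynomial:
the coefficient of `m` in the canonical (clean) representative. -/
noncomputable def coeffQ {X : Type} (q : DualPoly X) (m : (X ⊕ X) →₀ ℕ) : ℕ :=
  (clean (qrep q)).coeff m

/-- The sum of the monomial coefficients of a dual-indeterminate polynomial. -/
noncomputable def sumCoeff {X : Type} (q : DualPoly X) : ℕ :=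
  ∑ m ∈ (clean (qrep q)).support, (clean (qrep q)).coeff m

namespace DualPoly

variable {X K : Type} [CommSemiring K]

theorem dualCon_le_ker_eval₂Hom {f : X ⊕ X → K}
    (hf : ∀ p : X, f (Sum.inl p) * f (Sum.inr p) = 0) :
    dualCon X ≤ RingCon.ker (eval₂Hom (Nat.castRingHom K) f) :=
  RingCon.ringConGen_le.mpr <| by
    rintro _ _ ⟨rfl, p, rfl⟩
    simp [RingCon.ker_apply, hf p]

noncomputable def lift (f : X ⊕ X → K) (hf : ∀ p : X, f (Sum.inl p) * f (Sum.inr p) = 0) :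
    DualPoly X →+* K :=
  (dualCon X).lift (eval₂Hom (Nat.castRingHom K) f) (dualCon_le_ker_eval₂Hom hf)

theorem lift_tok (f : X ⊕ X → K) (hf : ∀ p : X, f (Sum.inl p) * f (Sum.inr p) = 0)
    (x : X ⊕ X) : lift f hf (tok x) = f x := by
  simp [lift, tok]

theorem hom_ext {S : Type*} [Semiring S] {g h : DualPoly X →+* S} (hgh : ∀ x, g (tok x) = h (tok x)) : g = h :=
  RingCon.Quotient.hom_ext <| MvPolynomial.ringHom_ext (fun n => by simp) hgh

end DualPoly

/-- universality of dual-indeterminate polynomials: for any commutative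
semiring `K` and any `f : X ∪ X̄ → K` with `f(p)·f(p̄) = 0` for all `p ∈ X`, there is
a unique semiring homomorphism `h : ℕ[X,X̄] → K` extending `f` on the tokens. -/
theorem dualPoly_universal {X K : Type} [CommSemiring K] (f : X ⊕ X → K)
    (hf : ∀ p : X, f (Sum.inl p) * f (Sum.inr p) = 0) :
    ∃! h : DualPoly X →+* K, ∀ x : X ⊕ X, h (tok x) = f x :=
  ⟨DualPoly.lift f hf, DualPoly.lift_tok f hf, fun _ hh =>
    DualPoly.hom_ext fun x => by rw [hh, DualPoly.lift_tok]⟩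
end

section
/- Two polynomials 𝔭, 𝔮 ∈ ℕ[X ∪ X̄] are congruent modulo the congruence generated by {p·p̄ = 0 : p ∈ X} if and only if they become identical after deleting from each of them all monomials that contain a pair of complementary tokens (i.e., monomials in which both p and p̄ occur for some p ∈ X). Consequently, the congruence classes in ℕ[X,X̄] are in one-to-one correspondence with those polynomials in ℕ[X ∪ X̄] none of whose monomials contain complementary tokens. -/
open MvPolynomial

/-!
Deleting the monomials that contain a complementary pair is additive, and since every multiple
of such a monomial again contains the pair, it satisfies
`clean (f * g) = clean (clean f * clean g)`.
Hence "having the same clean part" is a semiring congruence; it identifies `p * p̄` with `0`, so it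
contains the congruence generated by these relations. Conversely a monomial containing `p` and
`p̄` is a multiple of `p * p̄`, hence congruent to `0`, so every polynomial is congruent to its
clean part.
-/

section

variable {X : Type}

def HasComplementaryPair (m : (X ⊕ X) →₀ ℕ) : Prop :=
  ∃ p : X, m (Sum.inl p) ≠ 0 ∧ m (Sum.inr p) ≠ 0

theorem HasComplementaryPair.mono {m n : (X ⊕ X) →₀ ℕ} (h : HasComplementaryPair m)
    (hmn : m ≤ n) : HasComplementaryPair n := by
  obtain ⟨p, hl, hr⟩ := h
  exact ⟨p, (Nat.pos_of_ne_zero hl).trans_le (hmn _) |>.ne',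
    (Nat.pos_of_ne_zero hr).trans_le (hmn _) |>.ne'⟩

theorem hasComplementaryPair_single_add_single (p : X) :
    HasComplementaryPair (Finsupp.single (Sum.inl p) 1 + Finsupp.single (Sum.inr p) 1) :=
  ⟨p, by simp, by simp⟩

open Classical in
theorem coeff_clean (q : MvPolynomial (X ⊕ X) ℕ) (m : (X ⊕ X) →₀ ℕ) :
    (clean q).coeff m = if HasComplementaryPair m then 0 else q.coeff m := by
  rw [clean, coeff_sum]
  simp only [coeff_monomial, Finset.sum_ite_eq', Finset.mem_filter, mem_support_iff]
  by_cases hm : HasComplementaryPair m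
  · rw [if_pos hm, if_neg fun h => h.2 hm]
  · by_cases h0 : q.coeff m = 0
    · simp [h0]
    · rw [if_neg hm, if_pos ⟨h0, hm⟩]

@[simp]
theorem clean_zero : clean (0 : MvPolynomial (X ⊕ X) ℕ) = 0 := by
  ext m
  simp [coeff_clean]

theorem clean_add (f g : MvPolynomial (X ⊕ X) ℕ) : clean (f + g) = clean f + clean g := by
  ext m
  simp only [coeff_clean, coeff_add]
  split_ifs <;> rfl

open Classical in
theorem clean_monomial (s : (X ⊕ X) →₀ ℕ) (a : ℕ) :
    clean (monomial s a) = if HasComplementaryPair s then 0 else monomial s a := by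
  ext m
  rw [coeff_clean]
  rcases eq_or_ne s m with rfl | hsm <;> split_ifs <;> simp [coeff_monomial, *]

theorem clean_monomial_mul {s : (X ⊕ X) →₀ ℕ} (hs : HasComplementaryPair s) (a : ℕ)
    (g : MvPolynomial (X ⊕ X) ℕ) : clean (monomial s a * g) = 0 := by
  classical
  ext m
  rw [coeff_clean, coeff_monomial_mul']
  split_ifs with hm hsm
  · rfl
  · exact (hm (hs.mono hsm)).elim
  · rfl

theorem clean_mul_left (f g : MvPolynomial (X ⊕ X) ℕ) :
    clean (f * g) = clean (clean f * g) := by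
  classical
  induction f using induction_on' with
  | monomial s a =>
    rw [clean_monomial]
    split_ifs with hs
    · rw [clean_monomial_mul hs, zero_mul, clean_zero]
    · rfl
  | add f₁ f₂ h₁ h₂ => rw [add_mul, clean_add, h₁, h₂, ← clean_add, ← add_mul, ← clean_add]

theorem clean_mul (f g : MvPolynomial (X ⊕ X) ℕ) :
    clean (f * g) = clean (clean f * clean g) := by
  rw [clean_mul_left, mul_comm, clean_mul_left, mul_comm]

def cleanCon (X : Type) : RingCon (MvPolynomial (X ⊕ X) ℕ) where
  r f g := clean f = clean g
  iseqv := ⟨fun _ => rfl, Eq.symm, Eq.trans⟩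
  mul' h₁ h₂ := by rw [clean_mul, h₁, h₂, ← clean_mul]
  add' h₁ h₂ := by rw [clean_add, h₁, h₂, ← clean_add]

theorem clean_X_mul_X (p : X) :
    clean (MvPolynomial.X (Sum.inl p) * MvPolynomial.X (Sum.inr p) :
      MvPolynomial (X ⊕ X) ℕ) = 0 := by
  rw [MvPolynomial.X, MvPolynomial.X, monomial_mul, clean_monomial,
    if_pos (hasComplementaryPair_single_add_single p)]

theorem dualCon_le_cleanCon : dualCon X ≤ cleanCon X :=
  RingCon.ringConGen_le.mpr <| by
    rintro _ _ ⟨rfl, p, rfl⟩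
    exact (clean_X_mul_X p).trans clean_zero.symm

theorem dualCon_monomial_zero {s : (X ⊕ X) →₀ ℕ} (hs : HasComplementaryPair s) (a : ℕ) :
    dualCon X (monomial s a) 0 := by
  obtain ⟨p, hl, hr⟩ := hs
  set t : (X ⊕ X) →₀ ℕ := Finsupp.single (Sum.inl p) 1 + Finsupp.single (Sum.inr p) 1
  have hts : t ≤ s := by
    intro x
    rcases x with x | x <;> by_cases hx : x = p <;> simp [t, hx] <;> omega
  have hfactor : (monomial s a : MvPolynomial (X ⊕ X) ℕ) =
      MvPolynomial.X (Sum.inl p) * MvPolynomial.X (Sum.inr p) * monomial (s - t) a := by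
    rw [MvPolynomial.X, MvPolynomial.X, monomial_mul, monomial_mul, add_tsub_cancel_of_le hts,
      one_mul, one_mul]
  have hpair : dualCon X (MvPolynomial.X (Sum.inl p) * MvPolynomial.X (Sum.inr p)) 0 :=
    RingConGen.Rel.of _ _ ⟨rfl, p, rfl⟩
  simpa [hfactor] using (dualCon X).mul hpair ((dualCon X).refl (monomial (s - t) a))

theorem dualCon_clean (f : MvPolynomial (X ⊕ X) ℕ) : dualCon X f (clean f) := by
  classical
  induction f using induction_on' with
  | monomial s a =>
    rw [clean_monomial]
    split_ifs with hs
    · exact dualCon_monomial_zero hs a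
    · exact (dualCon X).refl _
  | add f g hf hg => rw [clean_add]; exact (dualCon X).add hf hg

theorem dualCon_iff_clean_eq_clean {f g : MvPolynomial (X ⊕ X) ℕ} :
    dualCon X f g ↔ clean f = clean g :=
  ⟨fun h => dualCon_le_cleanCon h,
    fun h => (dualCon X).trans (dualCon_clean f) (h ▸ (dualCon X).symm (dualCon_clean g))⟩

theorem clean_eq_self_iff {f : MvPolynomial (X ⊕ X) ℕ} :
    clean f = f ↔ ∀ m ∈ f.support, ¬ HasComplementaryPair m := by
  classical
  simp only [MvPolynomial.ext_iff, coeff_clean, mem_support_iff]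
  refine forall_congr' fun m => ?_
  split_ifs with hm <;> simp [hm, eq_comm]

theorem clean_clean (f : MvPolynomial (X ⊕ X) ℕ) : clean (clean f) = clean f := by
  classical
  refine clean_eq_self_iff.mpr fun m hm hpair => ?_
  rw [mem_support_iff, coeff_clean, if_pos hpair] at hm
  exact hm rfl

end

/-- two polynomials in `ℕ[X ∪ X̄]` are congruent modulo the congruence
generated by `p·p̄ = 0` iff they become identical after deleting all monomials
containing complementary tokens; consequently the congruence classes are in one-to-one
correspondence with the polynomials none of whose monomials contain complementary
tokens. -/
theorem dualCon_iff_clean_eq (X : Type) :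
    (∀ 𝔭 𝔮 : MvPolynomial (X ⊕ X) ℕ, dualCon X 𝔭 𝔮 ↔ clean 𝔭 = clean 𝔮) ∧
    ∀ z : DualPoly X, ∃! 𝔭 : MvPolynomial (X ⊕ X) ℕ,
      (∀ m ∈ 𝔭.support, ¬ ∃ p : X, m (Sum.inl p) ≠ 0 ∧ m (Sum.inr p) ≠ 0) ∧
      (𝔭 : DualPoly X) = z := by
  refine ⟨fun _ _ => dualCon_iff_clean_eq_clean, fun z => ?_⟩
  obtain ⟨r, rfl⟩ := Quot.exists_rep z
  refine ⟨clean r, ⟨clean_eq_self_iff.mp (clean_clean r), ?_⟩, ?_⟩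
  · exact (dualCon X).eq.mpr ((dualCon X).symm (dualCon_clean r))
  · rintro q ⟨hq, hqr⟩
    have hcongr : clean q = clean r := dualCon_iff_clean_eq_clean.mp ((dualCon X).eq.mp hqr)
    rwa [clean_eq_self_iff.mpr hq] at hcongr
end
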